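/- arXiv:1508.07219 — 6 statements merged into one kernel-verified Lean document; each statement's English description precedes it below -/
import Mathlib

section
/- For any symmetric 4×4 complex matrix M defining a smooth quadric surface {x M xᵀ = 0} in ℙ³, the quadratic form Q(p) = p · (∧²M) · pᵀ in Plücker coordinates vanishes on the Plücker coordinates of a line ℓ ⊂ ℙ³ if and only if ℓ is tangent to the quadric surface (including lines contained in it). -/
open MvPolynomial Matrix

/-- The Plücker quadric `p01*p23 - p02*p13 + p03*p12`, with variables indexed
`0 ↦ p01, 1 ↦ p02, 2 ↦ p03, 3 ↦ p12, 4 ↦ p13, 5 ↦ p23`. -/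
noncomputable def pluckerP : MvPolynomial (Fin 6) ℂ :=
  X 0 * X 5 - X 1 * X 4 + X 2 * X 3

/-- The ∂-bracket `(∂Q/∂p01)(∂Q/∂p23) - (∂Q/∂p02)(∂Q/∂p13) + (∂Q/∂p03)(∂Q/∂p12)`. -/
noncomputable def dbracket (Q : MvPolynomial (Fin 6) ℂ) : MvPolynomial (Fin 6) ℂ :=
  pderiv 0 Q * pderiv 5 Q - pderiv 1 Q * pderiv 4 Q + pderiv 2 Q * pderiv 3 Q
/-- First row/column index of the `i`-th pair, pairs ordered `01,02,03,12,13,23`. -/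
def pfst : Fin 6 → Fin 4 := ![0, 0, 0, 1, 1, 2]

/-- Second row/column index of the `i`-th pair. -/
def psnd : Fin 6 → Fin 4 := ![1, 2, 3, 2, 3, 3]

/-- The Plücker coordinate vector of the line spanned by `a` and `b` in `ℂ⁴`. -/
def pluck (a b : Fin 4 → ℂ) : Fin 6 → ℂ :=
  fun i => a (pfst i) * b (psnd i) - a (psnd i) * b (pfst i)

/-- The second compound (second exterior power) of a 4×4 matrix: the 6×6 matrix of
2×2 minors, indexed by the pairs `01,02,03,12,13,23`. -/
def cmpd {R : Type*} [CommRing R] (M : Matrix (Fin 4) (Fin 4) R) :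
    Matrix (Fin 6) (Fin 6) R :=
  fun i j => M (pfst i) (pfst j) * M (psnd i) (psnd j)
    - M (pfst i) (psnd j) * M (psnd i) (pfst j)

set_option maxHeartbeats 1000000 in
private lemma cmpd_pluck_identity (M : Matrix (Fin 4) (Fin 4) ℂ) (a b : Fin 4 → ℂ) :
    pluck a b ⬝ᵥ (cmpd M).mulVec (pluck a b) =
      (a ⬝ᵥ M.mulVec a) * (b ⬝ᵥ M.mulVec b) - (a ⬝ᵥ M.mulVec b) * (b ⬝ᵥ M.mulVec a) := by
  simp only [dotProduct, mulVec, Fin.sum_univ_six, Fin.sum_univ_four]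
  simp only [pluck, cmpd,
    show pfst 0 = 0 from rfl, show pfst 1 = 0 from rfl, show pfst 2 = 0 from rfl,
    show pfst 3 = 1 from rfl, show pfst 4 = 1 from rfl, show pfst 5 = 2 from rfl,
    show psnd 0 = 1 from rfl, show psnd 1 = 2 from rfl, show psnd 2 = 3 from rfl,
    show psnd 3 = 2 from rfl, show psnd 4 = 3 from rfl, show psnd 5 = 3 from rfl]
  ring


/-- For a smooth quadric surface `{x M xᵀ = 0}` in ℙ³ (`M` symmetric invertible),
the Hurwitz form `Q(p) = p·(∧²M)·pᵀ` vanishes at the Plücker coordinates of the line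
through `a`, `b` if and only if the line is tangent to the quadric, i.e. the
discriminant of the restricted binary quadratic form vanishes. -/
theorem hurwitz_form_vanishes_iff_tangent (M : Matrix (Fin 4) (Fin 4) ℂ)
    (hsym : M.IsSymm) (hsm : IsUnit M.det)
    (a b : Fin 4 → ℂ) (hab : LinearIndependent ℂ ![a, b]) :
    pluck a b ⬝ᵥ (cmpd M).mulVec (pluck a b) = 0 ↔
      (a ⬝ᵥ M.mulVec b) ^ 2 - (a ⬝ᵥ M.mulVec a) * (b ⬝ᵥ M.mulVec b) = 0 := by
  have hs : b ⬝ᵥ M.mulVec a = a ⬝ᵥ M.mulVec b := by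
    rw [dotProduct_mulVec, ← Matrix.mulVec_transpose, hsym.eq, dotProduct_comm]
  rw [cmpd_pluck_identity, hs]
  constructor
  · intro h; linear_combination -h
  · intro h; linear_combination -h
end

section
/- The Chow form of a pair of distinct lines ℓ₁, ℓ₂ in ℙ³, namely the product Q(p) = ω(p, q₁)·ω(p, q₂) where q₁, q₂ are the Plücker vectors of ℓ₁, ℓ₂ and ω is the bilinear form associated to the Plücker quadric, satisfies the coisotropy identity: (∂Q/∂p_{01})(∂Q/∂p_{23}) − (∂Q/∂p_{02})(∂Q/∂p_{13}) + (∂Q/∂p_{03})(∂Q/∂p_{12}) = s·Q + t·P(p) for some s, t ∈ ℂ, where P is the Plücker quadric. -/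
open MvPolynomial

/-- The polar bilinear form of the Plücker quadric:
`ω(p,q) = p01 q23 - p02 q13 + p03 q12 + p12 q03 - p13 q02 + p23 q01`. -/
def plOmega (p q : Fin 6 → ℂ) : ℂ :=
  p 0 * q 5 - p 1 * q 4 + p 2 * q 3 + p 3 * q 2 - p 4 * q 1 + p 5 * q 0

/-- The linear form `p ↦ ω(p, q)` as a polynomial in the Plücker variables. -/
noncomputable def omegaForm (q : Fin 6 → ℂ) : MvPolynomial (Fin 6) ℂ :=
  C (q 5) * X 0 - C (q 4) * X 1 + C (q 3) * X 2
    + C (q 2) * X 3 - C (q 1) * X 4 + C (q 0) * X 5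

/-- Evaluation of the Plücker quadric on a vector. -/
def plVal (q : Fin 6 → ℂ) : ℂ := q 0 * q 5 - q 1 * q 4 + q 2 * q 3

lemma pd0 (q : Fin 6 → ℂ) : pderiv 0 (omegaForm q) = C (q 5) := by
  simp [omegaForm, pderiv_X, Pi.single_apply]
lemma pd1 (q : Fin 6 → ℂ) : pderiv 1 (omegaForm q) = -C (q 4) := by
  simp [omegaForm, pderiv_X, Pi.single_apply]
lemma pd2 (q : Fin 6 → ℂ) : pderiv 2 (omegaForm q) = C (q 3) := by
  simp [omegaForm, pderiv_X, Pi.single_apply]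
lemma pd3 (q : Fin 6 → ℂ) : pderiv 3 (omegaForm q) = C (q 2) := by
  simp [omegaForm, pderiv_X, Pi.single_apply]
lemma pd4 (q : Fin 6 → ℂ) : pderiv 4 (omegaForm q) = -C (q 1) := by
  simp [omegaForm, pderiv_X, Pi.single_apply]
lemma pd5 (q : Fin 6 → ℂ) : pderiv 5 (omegaForm q) = C (q 0) := by
  simp [omegaForm, pderiv_X, Pi.single_apply]

/-- The Chow form `Q(p) = ω(p,q₁)·ω(p,q₂)` of a pair of distinct lines in ℙ³ with
Plücker vectors `q₁, q₂` satisfies the coisotropy identity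
`∂-bracket(Q) = s·Q + t·P` for some `s, t ∈ ℂ`. -/
theorem chow_form_of_line_pair_is_coisotropic (q₁ q₂ : Fin 6 → ℂ)
    (h₁ : plVal q₁ = 0) (h₂ : plVal q₂ = 0) (hq₁ : q₁ ≠ 0) (hq₂ : q₂ ≠ 0)
    (hne : ∀ c : ℂ, q₂ ≠ c • q₁) :
    ∃ s t : ℂ, dbracket (omegaForm q₁ * omegaForm q₂) =
      C s * (omegaForm q₁ * omegaForm q₂) + C t * pluckerP := by
  refine ⟨q₁ 0 * q₂ 5 + q₁ 5 * q₂ 0 - q₁ 1 * q₂ 4 - q₁ 4 * q₂ 1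
    + q₁ 2 * q₂ 3 + q₁ 3 * q₂ 2, 0, ?_⟩
  have H₁ : (C (q₁ 0) * C (q₁ 5) - C (q₁ 1) * C (q₁ 4) + C (q₁ 2) * C (q₁ 3)
      : MvPolynomial (Fin 6) ℂ) = 0 := by
    rw [← map_mul, ← map_mul, ← map_mul, ← map_sub, ← map_add, ← plVal, h₁, map_zero]
  have H₂ : (C (q₂ 0) * C (q₂ 5) - C (q₂ 1) * C (q₂ 4) + C (q₂ 2) * C (q₂ 3)
      : MvPolynomial (Fin 6) ℂ) = 0 := by
    rw [← map_mul, ← map_mul, ← map_mul, ← map_sub, ← map_add, ← plVal, h₂, map_zero]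
  simp only [dbracket, Derivation.leibniz, pd0, pd1, pd2, pd3, pd4, pd5, smul_eq_mul,
    map_add, map_sub, map_mul, map_zero]
  linear_combination (omegaForm q₂)^2 * H₁ + (omegaForm q₁)^2 * H₂
end

section
/- If Q is a square, i.e., Q = L² modulo the Plücker quadric for some linear form L in Plücker coordinates (meaning Q − L² = λ·P for some λ ∈ ℂ), then Q satisfies the coisotropy identity: the expression (∂Q/∂p_{01})(∂Q/∂p_{23}) − (∂Q/∂p_{02})(∂Q/∂p_{13}) + (∂Q/∂p_{03})(∂Q/∂p_{12}) lies in the ℂ-span of Q and the Plücker quadric P. -/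
open MvPolynomial

set_option maxHeartbeats 2000000 in
/-- If a quadratic form `Q` in the Plücker variables is a square modulo the Plücker
quadric, i.e. `Q = L² + λ·P` for some linear form `L` and `λ ∈ ℂ`, then `Q` satisfies
the coisotropy identity: `∂-bracket(Q)` lies in the span of `Q` and `P`. -/
theorem square_is_coisotropic (Q : MvPolynomial (Fin 6) ℂ) (l : Fin 6 → ℂ) (lam : ℂ)
    (hQ : Q = (∑ i : Fin 6, C (l i) * X i) ^ 2 + C lam * pluckerP) :
    ∃ s t : ℂ, dbracket Q = C s * Q + C t * pluckerP := by
  refine ⟨4 * plVal l + 2 * lam, lam ^ 2 - lam * (4 * plVal l + 2 * lam), ?_⟩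
  set L : MvPolynomial (Fin 6) ℂ := ∑ i : Fin 6, C (l i) * X i with hLdef
  have hd : ∀ i : Fin 6, pderiv i L = C (l i) := by
    intro i
    rw [hLdef]
    fin_cases i <;>
      simp [Fin.sum_univ_six, pderiv_X, Pi.single_apply]
  have hpd : ∀ i : Fin 6, pderiv i Q = 2 * C (l i) * L + C lam * pderiv i pluckerP := by
    intro i
    rw [hQ]
    rw [sq]
    simp only [map_add, pderiv_mul, pderiv_C_mul, pderiv_C, zero_mul, add_zero, hd]
    ring
  have hP0 : pderiv 0 pluckerP = X 5 := by
    simp [pluckerP, pderiv_mul, pderiv_X, Pi.single_apply]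
  have hP1 : pderiv 1 pluckerP = -X 4 := by
    simp [pluckerP, pderiv_mul, pderiv_X, Pi.single_apply]
  have hP2 : pderiv 2 pluckerP = X 3 := by
    simp [pluckerP, pderiv_mul, pderiv_X, Pi.single_apply]
  have hP3 : pderiv 3 pluckerP = X 2 := by
    simp [pluckerP, pderiv_mul, pderiv_X, Pi.single_apply]
  have hP4 : pderiv 4 pluckerP = -X 1 := by
    simp [pluckerP, pderiv_mul, pderiv_X, Pi.single_apply]
  have hP5 : pderiv 5 pluckerP = X 0 := by
    simp [pluckerP, pderiv_mul, pderiv_X, Pi.single_apply]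
  rw [dbracket, hpd 0, hpd 1, hpd 2, hpd 3, hpd 4, hpd 5,
    hP0, hP1, hP2, hP3, hP4, hP5, hQ, hLdef]
  simp only [plVal, map_add, map_sub, map_mul, map_pow, map_ofNat, Fin.sum_univ_six, pluckerP]
  ring
end

section
/- For every quadratic form Q in the six Plücker variables satisfying the coisotropy identity ∂-bracket(Q) = s·Q + t·P with some s,t ∈ ℂ, and Q not a scalar multiple of P, there exists a unique λ ∈ ℂ such that Q_λ := Q + λ·P satisfies ∂-bracket(Q_λ) = t′·P for some t′ ∈ ℂ (i.e., the coefficient of Q_λ on the right-hand side can be made zero by translating along P). -/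
open MvPolynomial

/-- Euler's identity for quadratic forms in six variables. -/
lemma euler2 (Q : MvPolynomial (Fin 6) ℂ) (hQ : Q.IsHomogeneous 2) :
    ∑ i : Fin 6, X i * pderiv i Q = C 2 * Q := by
  have step : ∀ d ∈ Q.support, ∀ i : Fin 6, X i * pderiv i (monomial d (coeff d Q))
      = monomial d (((d i : ℂ)) * coeff d Q) := by
    intro d _ i
    rw [pderiv_monomial]
    by_cases h : d i = 0
    · simp [h]
    · rw [X, monomial_mul, one_mul]
      have hdd : Finsupp.single i 1 + (d - Finsupp.single i 1) = d := by
        ext j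
        by_cases hji : j = i
        · subst hji; simp; omega
        · simp [Finsupp.single_apply, Ne.symm hji, hji]
      rw [hdd, mul_comm]
  calc ∑ i : Fin 6, X i * pderiv i Q
      = ∑ i : Fin 6, ∑ d ∈ Q.support, X i * pderiv i (monomial d (coeff d Q)) := by
        simp_rw [← Finset.mul_sum, ← map_sum, ← Q.as_sum]
    _ = ∑ d ∈ Q.support, ∑ i : Fin 6, X i * pderiv i (monomial d (coeff d Q)) :=
        Finset.sum_comm
    _ = ∑ d ∈ Q.support, C 2 * monomial d (coeff d Q) := by
        refine Finset.sum_congr rfl fun d hd => ?_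
        have hdeg : (∑ i : Fin 6, d i) = 2 := by
          have h1 : d.degree = 2 := by
            by_contra h
            exact (mem_support_iff.mp hd) (hQ.coeff_eq_zero h)
          rw [← h1, Finsupp.degree]
          exact (Finset.sum_subset (Finset.subset_univ _) (fun i _ hi => by
            simpa using Finsupp.notMem_support_iff.mp hi)).symm
        rw [Finset.sum_congr rfl (fun i _ => step d hd i), ← map_sum (monomial d),
          ← Finset.sum_mul, C_mul_monomial]
        congr 1
        rw [← Nat.cast_sum, hdeg]
        push_cast
        ring
    _ = C 2 * Q := by rw [← Finset.mul_sum, ← Q.as_sum]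

/-- Expansion of the ∂-bracket along translation by the Plücker quadric. -/
lemma dbracket_expand (Q : MvPolynomial (Fin 6) ℂ) (hQ : Q.IsHomogeneous 2) (l : ℂ) :
    dbracket (Q + C l * pluckerP) =
      dbracket Q + C (2 * l) * Q + C (l ^ 2) * pluckerP := by
  have p0 : pderiv 0 pluckerP = X 5 := by simp [pluckerP, pderiv_mul]
  have p1 : pderiv 1 pluckerP = -X 4 := by simp [pluckerP, pderiv_mul]
  have p2 : pderiv 2 pluckerP = X 3 := by simp [pluckerP, pderiv_mul]
  have p3 : pderiv 3 pluckerP = X 2 := by simp [pluckerP, pderiv_mul]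
  have p4 : pderiv 4 pluckerP = -X 1 := by simp [pluckerP, pderiv_mul]
  have p5 : pderiv 5 pluckerP = X 0 := by simp [pluckerP, pderiv_mul]
  have he := euler2 Q hQ
  rw [Fin.sum_univ_six] at he
  simp only [dbracket, map_add, pderiv_C_mul, p0, p1, p2, p3, p4, p5]
  rw [show (2 : ℂ) * l = l * 2 by ring, map_mul, mul_assoc, ← he]
  simp only [pluckerP, map_pow]
  ring

/-- Catanese's normalization: for every quadratic form `Q` satisfying the coisotropy
identity and not a scalar multiple of the Plücker quadric `P`, there is a unique
`λ ∈ ℂ` such that `Q + λP` satisfies `∂-bracket(Q + λP) = t'·P` for some `t' ∈ ℂ`. -/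
theorem catanese_normalization (Q : MvPolynomial (Fin 6) ℂ)
    (hQ : Q.IsHomogeneous 2)
    (hco : ∃ s t : ℂ, dbracket Q = C s * Q + C t * pluckerP)
    (hnp : ∀ c : ℂ, Q ≠ C c * pluckerP) :
    ∃! lam : ℂ, ∃ t' : ℂ,
      dbracket (Q + C lam * pluckerP) = C t' * pluckerP := by
  obtain ⟨s, t, hst⟩ := hco
  refine ⟨-s / 2, ⟨t + (-s / 2) ^ 2, ?_⟩, ?_⟩
  · rw [dbracket_expand Q hQ, hst]
    have h1 : (2 : ℂ) * (-s / 2) = -s := by ring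
    rw [h1, map_neg, map_add]
    ring
  · rintro l ⟨t', ht'⟩
    rw [dbracket_expand Q hQ, hst] at ht'
    have key : C (s + 2 * l) * Q = C (t' - t - l ^ 2) * pluckerP := by
      rw [map_add, map_sub, map_sub]
      linear_combination ht'
    by_contra hne
    have ha : s + 2 * l ≠ 0 := fun h => hne (by linear_combination (h : s + 2*l = 0) / 2)
    apply hnp ((t' - t - l ^ 2) / (s + 2 * l))
    have h2 := congrArg (fun p => C (s + 2 * l)⁻¹ * p) key
    simp only [← mul_assoc, ← C_mul, inv_mul_cancel₀ ha, C_1, one_mul] at h2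
    rw [h2, div_eq_inv_mul]
end

section
/- If Q₁ and Q₂ are quadratic forms in Plücker coordinates that are Chow forms of one-dimensional degree-2 cycles Z₁, Z₂ in ℙ³ (i.e., their zero loci on G(2,4) are exactly the lines meeting Z₁, resp. Z₂), and Z₁ ≠ Z₂ as cycles with Z₁, Z₂ each a pair of distinct lines, then Q₁ and Q₂ are not proportional modulo the Plücker relation. -/
/-!
Evaluating the identity `ω(·,q₁) ω(·,q₂) = α ω(·,q₁') ω(·,q₂') + β P` at a nonzero point `p₀` of the
common kernel of the four linear forms (it exists since `4 < 6`) and polarising at `p₀` gives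
`β ω(p₀, ·) = 0`, so `β = 0` by nondegeneracy of `ω`. It remains to see that a product of two
nonzero linear forms determines its factors up to scalars: the kernel of the first factor on the left
is killed by the right-hand side, hence by one of its factors, which is therefore proportional to it,
and cancelling it leaves the other two proportional.
-/

open MvPolynomial

/-- `v` and `w` are Plücker vectors of the same line (nonzero proportional). -/
def propTo (v w : Fin 6 → ℂ) : Prop := ∃ c : ℂ, c ≠ 0 ∧ w = c • v

open Module

namespace Module.Dual

variable {K V : Type*} [Field K] [AddCommGroup V] [Module K V]

theorem eq_zero_or_eq_zero_of_forall_mul_eq_zero {f g : Dual K V} (h : ∀ x, f x * g x = 0) :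
    f = 0 ∨ g = 0 := by
  by_contra! hfg
  obtain ⟨u, hu⟩ : ∃ u, f u ≠ 0 := by simpa [DFunLike.ne_iff] using hfg.1
  obtain ⟨v, hv⟩ : ∃ v, g v ≠ 0 := by simpa [DFunLike.ne_iff] using hfg.2
  have hgu : g u = 0 := (mul_eq_zero.mp (h u)).resolve_left hu
  have hfv : f v = 0 := (mul_eq_zero.mp (h v)).resolve_right hv
  have huv := h (u + v)
  simp only [map_add, hgu, hfv, add_zero, zero_add] at huv
  exact mul_ne_zero hu hv huv

theorem eq_of_forall_mul_eq_mul_left {f g k : Dual K V} (hf : f ≠ 0)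
    (h : ∀ x, f x * g x = f x * k x) : g = k := by
  refine sub_eq_zero.mp ((eq_zero_or_eq_zero_of_forall_mul_eq_zero fun x ↦ ?_).resolve_left hf)
  rw [LinearMap.sub_apply, mul_sub, h, sub_self]

theorem ker_le_ker_or_ker_le_ker_of_forall_mul_eq_zero {f h k : Dual K V}
    (H : ∀ x, f x = 0 → h x * k x = 0) : LinearMap.ker f ≤ LinearMap.ker h ∨
      LinearMap.ker f ≤ LinearMap.ker k := by
  have hres := eq_zero_or_eq_zero_of_forall_mul_eq_zero (f := h ∘ₗ (LinearMap.ker f).subtype)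
    (g := k ∘ₗ (LinearMap.ker f).subtype) fun x ↦ H x x.2
  exact hres.imp (fun h0 x hx ↦ LinearMap.mem_ker.mpr (LinearMap.congr_fun h0 ⟨x, hx⟩))
    (fun h0 x hx ↦ LinearMap.mem_ker.mpr (LinearMap.congr_fun h0 ⟨x, hx⟩))

theorem exists_eq_smul_of_ker_le_ker {f g : Dual K V} (h : LinearMap.ker f ≤ LinearMap.ker g) :
    ∃ c : K, g = c • f := by
  have hspan := mem_span_of_iInf_ker_le_ker (L := fun _ : Unit ↦ f) (by simpa using h)
  rw [Set.range_const, Submodule.mem_span_singleton] at hspan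
  exact hspan.imp fun c hc ↦ hc.symm

theorem proportional_of_forall_mul_eq_mul_of_ker_le_ker {f g h k : Dual K V} {a : K}
    (hf : f ≠ 0) (hh : h ≠ 0) (ha : a ≠ 0) (H : ∀ x, f x * g x = a * (h x * k x))
    (hker : LinearMap.ker f ≤ LinearMap.ker h) :
    (∃ c : K, c ≠ 0 ∧ h = c • f) ∧ ∃ d : K, d ≠ 0 ∧ k = d • g := by
  obtain ⟨c, rfl⟩ := exists_eq_smul_of_ker_le_ker hker
  have hc : c ≠ 0 := by rintro rfl; exact hh (zero_smul K f)
  have hg : g = (a * c) • k := eq_of_forall_mul_eq_mul_left hf fun x ↦ by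
    simp only [LinearMap.smul_apply, smul_eq_mul] at H ⊢
    linear_combination H x
  refine ⟨⟨c, hc, rfl⟩, (a * c)⁻¹, inv_ne_zero (mul_ne_zero ha hc), ?_⟩
  rw [hg, smul_smul, inv_mul_cancel₀ (mul_ne_zero ha hc), one_smul]

theorem proportional_of_forall_mul_eq_mul {f g h k : Dual K V} {a : K}
    (hf : f ≠ 0) (hh : h ≠ 0) (hk : k ≠ 0) (ha : a ≠ 0) (H : ∀ x, f x * g x = a * (h x * k x)) :
    ((∃ c : K, c ≠ 0 ∧ h = c • f) ∧ ∃ d : K, d ≠ 0 ∧ k = d • g) ∨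
      ((∃ c : K, c ≠ 0 ∧ k = c • f) ∧ ∃ d : K, d ≠ 0 ∧ h = d • g) := by
  have hzero : ∀ x, f x = 0 → h x * k x = 0 := fun x hx ↦ by
    simpa [hx, ha] using (H x).symm
  rcases ker_le_ker_or_ker_le_ker_of_forall_mul_eq_zero hzero with hker | hker
  · exact .inl (proportional_of_forall_mul_eq_mul_of_ker_le_ker hf hh ha H hker)
  · exact .inr (proportional_of_forall_mul_eq_mul_of_ker_le_ker hf hk ha
      (fun x ↦ by rw [H x, mul_comm (h x)]) hker)

theorem exists_ne_zero_forall_apply_eq_zero [FiniteDimensional K V] {ι : Type*} [Fintype ι]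
    (f : ι → Dual K V) (hcard : Fintype.card ι < finrank K V) : ∃ x ≠ 0, ∀ i, f i x = 0 := by
  have hker : LinearMap.ker (LinearMap.pi f) ≠ ⊥ :=
    LinearMap.ker_ne_bot_of_finrank_lt (by simpa using hcard)
  obtain ⟨x, hx, hx0⟩ := Submodule.exists_mem_ne_zero_of_ne_bot hker
  exact ⟨x, hx0, fun i ↦ congr_fun (LinearMap.mem_ker.mp hx) i⟩

end Module.Dual

theorem plOmega_comm (p q : Fin 6 → ℂ) : plOmega p q = plOmega q p := by
  simp only [plOmega]; ring

theorem plVal_add (p r : Fin 6 → ℂ) : plVal (p + r) = plVal p + plVal r + plOmega p r := by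
  simp only [plVal, plOmega, Pi.add_apply]; ring

noncomputable def omegaDual : (Fin 6 → ℂ) →ₗ[ℂ] Dual ℂ (Fin 6 → ℂ) :=
  LinearMap.mk₂ ℂ (fun q p ↦ plOmega p q)
    (fun _ _ _ ↦ by simp only [plOmega, Pi.add_apply]; ring)
    (fun _ _ _ ↦ by simp only [plOmega, Pi.smul_apply, smul_eq_mul]; ring)
    (fun _ _ _ ↦ by simp only [plOmega, Pi.add_apply]; ring)
    (fun _ _ _ ↦ by simp only [plOmega, Pi.smul_apply, smul_eq_mul]; ring)

theorem omegaDual_apply (q p : Fin 6 → ℂ) : omegaDual q p = plOmega p q := rfl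

theorem omegaDual_injective : Function.Injective omegaDual := by
  refine (injective_iff_map_eq_zero _).mpr fun q hq ↦ funext fun j ↦ ?_
  -- `ω(e_{5-j}, q) = ± q j`
  have := LinearMap.congr_fun hq (Pi.single j.rev 1)
  fin_cases j <;> simpa [omegaDual_apply, plOmega, Pi.single_apply] using this

theorem eval_omegaForm (p q : Fin 6 → ℂ) : eval p (omegaForm q) = omegaDual q p := by
  simp only [omegaForm, omegaDual_apply, plOmega, map_add, map_sub, map_mul, eval_C, eval_X]
  ring

theorem eval_pluckerP (p : Fin 6 → ℂ) : eval p pluckerP = plVal p := by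
  simp only [pluckerP, plVal, map_add, map_sub, map_mul, eval_X]

theorem propTo_of_omegaDual_eq_smul {v w : Fin 6 → ℂ}
    (h : ∃ c : ℂ, c ≠ 0 ∧ omegaDual w = c • omegaDual v) : propTo v w := by
  obtain ⟨c, hc, hcw⟩ := h
  exact ⟨c, hc, omegaDual_injective (by rw [hcw, map_smul])⟩

theorem eq_zero_of_forall_mul_eq_mul_add_mul_plVal {q₁ q₂ q₃ q₄ : Fin 6 → ℂ} {α β : ℂ}
    (H : ∀ p, omegaDual q₁ p * omegaDual q₂ p =
      α * (omegaDual q₃ p * omegaDual q₄ p) + β * plVal p) : β = 0 := by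
  obtain ⟨p₀, hp₀, hker⟩ := Dual.exists_ne_zero_forall_apply_eq_zero
    ![omegaDual q₁, omegaDual q₂, omegaDual q₃, omegaDual q₄] (by simp)
  have h₁ : omegaDual q₁ p₀ = 0 := hker 0
  have h₂ : omegaDual q₂ p₀ = 0 := hker 1
  have h₃ : omegaDual q₃ p₀ = 0 := hker 2
  have h₄ : omegaDual q₄ p₀ = 0 := hker 3
  by_contra hβ
  refine hp₀ (omegaDual_injective (LinearMap.ext fun r ↦ ?_))
  have hpolar : β * plOmega p₀ r = 0 := by
    have e := H (p₀ + r)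
    rw [map_add, map_add, map_add, map_add, plVal_add, h₁, h₂, h₃, h₄] at e
    have e₀ := H p₀
    rw [h₁, h₂, h₃, h₄] at e₀
    linear_combination H r + e₀ - e
  rw [omegaDual_apply, plOmega_comm, map_zero, LinearMap.zero_apply]
  exact (mul_eq_zero.mp hpolar).resolve_left hβ

theorem chow_forms_of_distinct_line_pairs_not_proportional_general
    (q₁ q₂ q₁' q₂' : Fin 6 → ℂ)
    (hq₁ : q₁ ≠ 0) (hq₁' : q₁' ≠ 0) (hq₂' : q₂' ≠ 0)
    (hZ : ¬ ((propTo q₁ q₁' ∧ propTo q₂ q₂') ∨ (propTo q₁ q₂' ∧ propTo q₂ q₁'))) :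
    ¬ ∃ α β : ℂ, α ≠ 0 ∧
      omegaForm q₁ * omegaForm q₂ =
        C α * (omegaForm q₁' * omegaForm q₂') + C β * pluckerP := by
  rintro ⟨α, β, hα, heq⟩
  have hpt : ∀ p, omegaDual q₁ p * omegaDual q₂ p =
      α * (omegaDual q₁' p * omegaDual q₂' p) + β * plVal p := fun p ↦ by
    simpa only [map_add, map_mul, eval_C, eval_omegaForm, eval_pluckerP] using congrArg (eval p) heq
  obtain rfl := eq_zero_of_forall_mul_eq_mul_add_mul_plVal hpt
  have hne {q : Fin 6 → ℂ} (hq : q ≠ 0) : omegaDual q ≠ 0 :=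
    (map_ne_zero_iff _ omegaDual_injective).mpr hq
  rcases Dual.proportional_of_forall_mul_eq_mul (hne hq₁) (hne hq₁') (hne hq₂') hα
    (fun p ↦ by simpa using hpt p) with ⟨h₁, h₂⟩ | ⟨h₁, h₂⟩
  · exact hZ (.inl ⟨propTo_of_omegaDual_eq_smul h₁, propTo_of_omegaDual_eq_smul h₂⟩)
  · exact hZ (.inr ⟨propTo_of_omegaDual_eq_smul h₁, propTo_of_omegaDual_eq_smul h₂⟩)

/-- Injectivity of the Chow embedding on pairs of lines: if `Z₁ = ℓ₁ + ℓ₂` and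
`Z₂ = ℓ₁' + ℓ₂'` are distinct cycles, each a pair of distinct lines, then their Chow
forms are not proportional modulo the Plücker relation. -/
theorem chow_forms_of_distinct_line_pairs_not_proportional
    (q₁ q₂ q₁' q₂' : Fin 6 → ℂ)
    (h₁ : plVal q₁ = 0) (h₂ : plVal q₂ = 0) (h₁' : plVal q₁' = 0) (h₂' : plVal q₂' = 0)
    (hq₁ : q₁ ≠ 0) (hq₂ : q₂ ≠ 0) (hq₁' : q₁' ≠ 0) (hq₂' : q₂' ≠ 0)
    (hd : ¬ propTo q₁ q₂) (hd' : ¬ propTo q₁' q₂')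
    (hZ : ¬ ((propTo q₁ q₁' ∧ propTo q₂ q₂') ∨ (propTo q₁ q₂' ∧ propTo q₂ q₁'))) :
    ¬ ∃ α β : ℂ, α ≠ 0 ∧
      omegaForm q₁ * omegaForm q₂ =
        C α * (omegaForm q₁' * omegaForm q₂') + C β * pluckerP :=
  chow_forms_of_distinct_line_pairs_not_proportional_general q₁ q₂ q₁' q₂' hq₁ hq₁' hq₂' hZ
end

section
/- If a quadratic form Q in the six Plücker variables is the Chow form of a pair of lines, Q = ω(p,q₁)ω(p,q₂) with P(q₁) = P(q₂) = 0, then ∂-bracket(Q) = ω(q₁,q₂)·Q (exactly, with t = 0 in the coisotropy identity), where ω(q₁,q₂) is the polar Plücker pairing of the two lines. -/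
open MvPolynomial

lemma pderiv_omegaForm (q : Fin 6 → ℂ) :
    pderiv 0 (omegaForm q) = C (q 5) ∧ pderiv 1 (omegaForm q) = C (-q 4) ∧
    pderiv 2 (omegaForm q) = C (q 3) ∧ pderiv 3 (omegaForm q) = C (q 2) ∧
    pderiv 4 (omegaForm q) = C (-q 1) ∧ pderiv 5 (omegaForm q) = C (q 0) := by
  refine ⟨?_, ?_, ?_, ?_, ?_, ?_⟩ <;>
    simp (config := { decide := true }) [omegaForm, pderiv_X, Pi.single_apply, map_neg]

/-- If `Q = ω(p,q₁)·ω(p,q₂)` is the Chow form of a pair of lines (so `P(q₁) = P(q₂) = 0`),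
then `∂-bracket(Q) = ω(q₁,q₂)·Q`, i.e. the coisotropy identity holds with
`s = ω(q₁,q₂)` and `t = 0`. -/
theorem dbracket_of_chow_form_of_line_pair (q₁ q₂ : Fin 6 → ℂ)
    (h₁ : plVal q₁ = 0) (h₂ : plVal q₂ = 0) :
    dbracket (omegaForm q₁ * omegaForm q₂) =
      C (plOmega q₁ q₂) * (omegaForm q₁ * omegaForm q₂) := by
  have hC1 : (C (plVal q₁) : MvPolynomial (Fin 6) ℂ) = 0 := by rw [h₁]; simp
  have hC2 : (C (plVal q₂) : MvPolynomial (Fin 6) ℂ) = 0 := by rw [h₂]; simp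
  obtain ⟨a0, a1, a2, a3, a4, a5⟩ := pderiv_omegaForm q₁
  obtain ⟨b0, b1, b2, b3, b4, b5⟩ := pderiv_omegaForm q₂
  simp only [plVal, map_sub, map_add, map_mul, map_neg] at hC1 hC2
  simp only [dbracket, Derivation.leibniz, smul_eq_mul, a0, a1, a2, a3, a4, a5,
    b0, b1, b2, b3, b4, b5, plOmega, map_sub, map_add, map_mul, map_neg]
  linear_combination hC1 * (omegaForm q₂)^2 + hC2 * (omegaForm q₁)^2
end
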